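/- arXiv:2210.16181 — 6 statements merged into one kernel-verified Lean document; each statement's English description precedes it below -/
import Mathlib

section
/- Let (P(t))_{t≥1} be a sequence of m×m doubly stochastic real matrices satisfying the connectivity assumption with constants ζ > 0 and integer B ≥ 1. For t ≥ s define the product P(t,s) = P(t)P(t−1)⋯P(s+1)P(s). Then for all i, j and all t ≥ τ, |P(t,τ)_{ij} − 1/m| ≤ ϑ κ^{t−τ}, where ϑ = (1 − ζ/(4m²))^{−2} and κ = (1 − ζ/(4m²))^{1/B}. -/
/-- The backward product of averaging matrices:
`matrixProd P s n = P (s+n) * P (s+n-1) * ⋯ * P (s+1) * P s`,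
so that `P(t, s)` of the paper (for `s ≤ t`) is `matrixProd P s (t - s)`. -/
def matrixProd {m : ℕ} (P : ℕ → Matrix (Fin m) (Fin m) ℝ) (s : ℕ) :
    ℕ → Matrix (Fin m) (Fin m) ℝ
  | 0 => P s
  | n + 1 => P (s + n + 1) * matrixProd P s n

/-!
A doubly stochastic step `x ↦ A x` preserves the mean of `x` and lowers its sum of squared
deviations `V x = ∑ i, (x i - x̄) ^ 2` by exactly `∑ i j, A i j * (x j - (A x) i) ^ 2`.
During a block of `B` steps whose edges connect all agents, every gap between consecutive
sorted values of the initial vector is crossed by an edge of some step (otherwise the agents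
above the gap and those below it would stay apart). Charging each gap to the row of the upper
end of such an edge, where the diagonal weight and the edge weight are both at least `ζ`,
shows that `V` drops by a factor `1 - ζ / (2 m²) ≤ (1 - ζ / (4 m²)) ^ 2` per block.
The column `j` of `P(t, τ)` is the image of the basis vector `eⱼ`, which has mean `1 / m`
and `V eⱼ ≤ 1`; the blocks cut off at both ends of `[τ, t]` cost the factor `ϑ`.
-/

open Finset Matrix

section SumSqDev

variable {n : Type*} [Fintype n]

noncomputable def sumSqDev (x : n → ℝ) : ℝ :=
  ∑ i, (x i - (∑ l, x l) / Fintype.card n) ^ 2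

lemma sumSqDev_nonneg (x : n → ℝ) : 0 ≤ sumSqDev x :=
  sum_nonneg fun _ _ => sq_nonneg _

lemma sq_sub_mean_le_sumSqDev (x : n → ℝ) (i : n) :
    (x i - (∑ l, x l) / Fintype.card n) ^ 2 ≤ sumSqDev x :=
  single_le_sum (f := fun i => (x i - (∑ l, x l) / Fintype.card n) ^ 2)
    (fun _ _ => sq_nonneg _) (mem_univ i)

lemma card_mul_sum_div_card (x : n → ℝ) :
    Fintype.card n * ((∑ l, x l) / Fintype.card n) = ∑ l, x l := by
  rcases isEmpty_or_nonempty n with hn | hn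
  · simp
  · exact mul_div_cancel₀ _ (Nat.cast_ne_zero.2 Fintype.card_ne_zero)

lemma sumSqDev_eq (x : n → ℝ) :
    sumSqDev x = ∑ i, x i ^ 2 - (∑ i, x i) ^ 2 / Fintype.card n := by
  have hmean := card_mul_sum_div_card x
  set μ := (∑ l, x l) / Fintype.card n
  rw [show (∑ i, x i) ^ 2 / Fintype.card n = μ * ∑ i, x i by ring]
  simp only [sumSqDev, sub_sq, sum_add_distrib, sum_sub_distrib, sum_const, card_univ,
    nsmul_eq_mul, ← sum_mul, ← mul_sum]
  linear_combination μ * hmean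

lemma sumSqDev_le_sum_sq_sub (x : n → ℝ) (c : ℝ) : sumSqDev x ≤ ∑ i, (x i - c) ^ 2 := by
  have hmean := card_mul_sum_div_card x
  set μ := (∑ l, x l) / Fintype.card n
  have hexp : ∑ i, (x i - c) ^ 2 = sumSqDev x + Fintype.card n * (μ - c) ^ 2 := by
    simp only [sumSqDev, sub_sq, sum_add_distrib, sum_sub_distrib, sum_const, card_univ,
      nsmul_eq_mul, ← sum_mul, ← mul_sum]
    linear_combination (2 * c - 2 * μ) * hmean
  rw [hexp]
  have : (0 : ℝ) ≤ Fintype.card n * (μ - c) ^ 2 := by positivity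
  linarith

lemma sumSqDev_single_le_one [DecidableEq n] (j : n) : sumSqDev (Pi.single j 1 : n → ℝ) ≤ 1 :=
  (sumSqDev_le_sum_sq_sub _ 0).trans_eq (by simp [Pi.single_apply])

def dissipation (A : Matrix n n ℝ) (x : n → ℝ) : ℝ :=
  ∑ i, ∑ j, A i j * (x j - (A *ᵥ x) i) ^ 2

lemma dissipation_nonneg {A : Matrix n n ℝ} (hA : ∀ i j, 0 ≤ A i j) (x : n → ℝ) :
    0 ≤ dissipation A x :=
  sum_nonneg fun i _ => sum_nonneg fun j _ => mul_nonneg (hA i j) (sq_nonneg _)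

end SumSqDev

def IsEdge {n : Type*} (A : Matrix n n ℝ) (i j : n) : Prop :=
  i ≠ j ∧ (0 < A i j ∨ 0 < A j i)

section DoublyStochastic

variable {n : Type*} [Fintype n] [DecidableEq n]

lemma dissipation_eq {A : Matrix n n ℝ} (hA : A ∈ doublyStochastic ℝ n) (x : n → ℝ) :
    dissipation A x = ∑ j, x j ^ 2 - ∑ i, (A *ᵥ x) i ^ 2 := by
  obtain ⟨-, hrow, hcol⟩ := mem_doublyStochastic_iff_sum.1 hA
  have hrowTerm : ∀ i, ∑ j, A i j * (x j - (A *ᵥ x) i) ^ 2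
      = ∑ j, A i j * x j ^ 2 - (A *ᵥ x) i ^ 2 := by
    intro i
    set y := (A *ᵥ x) i
    have hexp : ∀ j, A i j * (x j - y) ^ 2
        = A i j * x j ^ 2 - 2 * y * (A i j * x j) + y ^ 2 * A i j := fun j => by ring
    simp only [hexp, sum_add_distrib, sum_sub_distrib, ← mul_sum, hrow]
    rw [show ∑ j, A i j * x j = y from rfl]
    ring
  rw [dissipation, sum_congr rfl fun i _ => hrowTerm i, sum_sub_distrib, sum_comm]
  simp only [← sum_mul, hcol, one_mul]

lemma sumSqDev_mulVec {A : Matrix n n ℝ} (hA : A ∈ doublyStochastic ℝ n) (x : n → ℝ) :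
    sumSqDev (A *ᵥ x) = sumSqDev x - dissipation A x := by
  rw [sumSqDev_eq, sumSqDev_eq, dissipation_eq hA, sum_mulVec_of_mem_doublyStochastic hA]
  ring

lemma sumSqDev_mulVec_le {A : Matrix n n ℝ} (hA : A ∈ doublyStochastic ℝ n) (x : n → ℝ) :
    sumSqDev (A *ᵥ x) ≤ sumSqDev x := by
  rw [sumSqDev_mulVec hA]
  linarith [dissipation_nonneg (fun i j => nonneg_of_mem_doublyStochastic hA (i := i) (j := j)) x]

lemma sumSqDev_eq_sub_sum_dissipation {Q : ℕ → Matrix n n ℝ} {w : ℕ → n → ℝ} {B : ℕ}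
    (hQ : ∀ r < B, Q r ∈ doublyStochastic ℝ n) (hw : ∀ r < B, w (r + 1) = Q r *ᵥ w r) :
    sumSqDev (w B) = sumSqDev (w 0) - ∑ r ∈ range B, dissipation (Q r) (w r) := by
  induction B with
  | zero => simp
  | succ B ih =>
    rw [sum_range_succ, hw B B.lt_succ_self, sumSqDev_mulVec (hQ B B.lt_succ_self),
      ih (fun r hr => hQ r (by omega)) (fun r hr => hw r (by omega))]
    ring

lemma le_mulVec_apply_of_forall_pos {A : Matrix n n ℝ} (hA : A ∈ rowStochastic ℝ n)
    {x : n → ℝ} {b : ℝ} {i : n} (h : ∀ j, 0 < A i j → b ≤ x j) : b ≤ (A *ᵥ x) i :=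
  calc b = ∑ j, A i j * b := by rw [← sum_mul, sum_row_of_mem_rowStochastic hA, one_mul]
    _ ≤ ∑ j, A i j * x j := sum_le_sum fun j _ => by
        rcases (nonneg_of_mem_rowStochastic hA (i := i) (j := j)).eq_or_lt with h0 | hpos
        · rw [← h0, zero_mul, zero_mul]
        · exact mul_le_mul_of_nonneg_left (h j hpos) hpos.le

lemma mulVec_apply_le_of_forall_pos {A : Matrix n n ℝ} (hA : A ∈ rowStochastic ℝ n)
    {x : n → ℝ} {a : ℝ} {i : n} (h : ∀ j, 0 < A i j → x j ≤ a) : (A *ᵥ x) i ≤ a := by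
  simpa [mulVec_neg] using
    le_mulVec_apply_of_forall_pos hA (x := -x) (b := -a) fun j hj => neg_le_neg (h j hj)

end DoublyStochastic

theorem Relation.ReflTransGen.exists_boundary {α : Type*} {R : α → α → Prop} {p : α → Prop}
    {u v : α} (h : Relation.ReflTransGen R u v) (hu : p u) (hv : ¬ p v) :
    ∃ c d, R c d ∧ p c ∧ ¬ p d := by
  induction h with
  | refl => exact absurd hu hv
  | @tail c d _ hcd ih =>
    by_cases hc : p c
    exacts [⟨c, d, hcd, hc, hv⟩, ih hc]

section Cut

variable {n : Type*} [Fintype n] [DecidableEq n] {Q : ℕ → Matrix n n ℝ} {w : ℕ → n → ℝ} {B : ℕ}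
  {a b : ℝ}

lemma cut_preserved (hQ : ∀ r < B, Q r ∈ rowStochastic ℝ n)
    (hw : ∀ r < B, w (r + 1) = Q r *ᵥ w r) (hcut : ∀ i, w 0 i ≤ a ∨ b ≤ w 0 i)
    (hno : ∀ r < B, ∀ i j, IsEdge (Q r) i j → b ≤ w r i → a < w r j)
    {r : ℕ} (hr : r ≤ B) (i : n) :
    (b ≤ w 0 i → b ≤ w r i) ∧ (w 0 i ≤ a → w r i ≤ a) := by
  induction r generalizing i with
  | zero => exact ⟨id, id⟩
  | succ k ih =>
    have hk : k < B := hr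
    have ih := ih hk.le
    rw [hw k hk]
    refine ⟨fun hi => le_mulVec_apply_of_forall_pos (hQ k hk) fun j hj => ?_,
      fun hi => mulVec_apply_le_of_forall_pos (hQ k hk) fun j hj => ?_⟩
    · obtain rfl | hij := eq_or_ne i j
      · exact (ih i).1 hi
      refine (hcut j).elim (fun hja => ?_) (ih j).1
      exact absurd ((ih j).2 hja) (hno k hk i j ⟨hij, .inl hj⟩ ((ih i).1 hi)).not_ge
    · obtain rfl | hij := eq_or_ne i j
      · exact (ih i).2 hi
      refine (hcut j).elim (ih j).2 (fun hjb => ?_)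
      exact absurd ((ih i).2 hi) (hno k hk j i ⟨hij.symm, .inr hj⟩ ((ih j).1 hjb)).not_ge

lemma exists_isEdge_across_cut (hQ : ∀ r < B, Q r ∈ rowStochastic ℝ n)
    (hw : ∀ r < B, w (r + 1) = Q r *ᵥ w r)
    (hconn : ∀ u v, Relation.ReflTransGen (fun c d => ∃ r < B, IsEdge (Q r) c d) u v)
    (hcut : ∀ i, w 0 i ≤ a ∨ b ≤ w 0 i) {u v : n} (hu : b ≤ w 0 u) (hv : ¬ b ≤ w 0 v) :
    ∃ r < B, ∃ i j, IsEdge (Q r) i j ∧ b ≤ w r i ∧ w r j ≤ a := by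
  by_contra! hno
  obtain ⟨c, d, ⟨r, hr, hcd⟩, hc, hd⟩ :=
    (hconn u v).exists_boundary (p := fun i => b ≤ w 0 i) hu hv
  have hpres := cut_preserved hQ hw hcut hno hr.le
  exact (hno r hr c d hcd ((hpres c).1 hc)).not_ge ((hpres d).2 ((hcut d).resolve_right hd))

end Cut

lemma sum_sq_sub_le_sq_of_monotone {s : ℕ → ℝ} (hs : Monotone s) {F : Finset ℕ} {c d : ℝ}
    (hF : ∀ ℓ ∈ F, c ≤ s ℓ ∧ s (ℓ + 1) ≤ d) (hcd : c ≤ d) :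
    ∑ ℓ ∈ F, (s (ℓ + 1) - s ℓ) ^ 2 ≤ (d - c) ^ 2 := by
  have hgap : ∀ ℓ ∈ F, 0 ≤ s (ℓ + 1) - s ℓ := fun ℓ _ => sub_nonneg.2 (hs ℓ.le_succ)
  have hsum : ∑ ℓ ∈ F, (s (ℓ + 1) - s ℓ) ≤ d - c := by
    rcases F.eq_empty_or_nonempty with rfl | hne
    · simpa using hcd
    have hsub : F ⊆ Ico (F.min' hne) (F.max' hne + 1) := fun ℓ hℓ =>
      mem_Ico.2 ⟨F.min'_le ℓ hℓ, Nat.lt_succ_of_le (F.le_max' ℓ hℓ)⟩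
    calc ∑ ℓ ∈ F, (s (ℓ + 1) - s ℓ)
        ≤ ∑ ℓ ∈ Ico (F.min' hne) (F.max' hne + 1), (s (ℓ + 1) - s ℓ) :=
          sum_le_sum_of_subset_of_nonneg hsub fun ℓ _ _ => sub_nonneg.2 (hs ℓ.le_succ)
      _ = s (F.max' hne + 1) - s (F.min' hne) :=
          sum_Ico_sub s ((F.min'_le_max' hne).trans (F.max' hne).le_succ)
      _ ≤ d - c := by
          linarith [(hF _ (F.max'_mem hne)).2, (hF _ (F.min'_mem hne)).1]
  calc ∑ ℓ ∈ F, (s (ℓ + 1) - s ℓ) ^ 2 ≤ (∑ ℓ ∈ F, (s (ℓ + 1) - s ℓ)) ^ 2 :=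
        sum_sq_le_sq_sum_of_nonneg hgap
    _ ≤ (d - c) ^ 2 := pow_le_pow_left₀ (sum_nonneg hgap) hsum 2

lemma half_mul_sq_sub_le_sum_mul_sq {n : Type*} [Fintype n] {q v : n → ℝ} {ζ : ℝ} (μ : ℝ)
    (hζ : 0 ≤ ζ) (hq : ∀ j, 0 ≤ q j) {a b : n} (hab : a ≠ b) (ha : ζ ≤ q a) (hb : ζ ≤ q b) :
    ζ / 2 * (v a - v b) ^ 2 ≤ ∑ j, q j * (v j - μ) ^ 2 := by
  have hpair := add_le_sum (fun j _ => mul_nonneg (hq j) (sq_nonneg (v j - μ)))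
    (mem_univ a) (mem_univ b) hab
  have hA := mul_le_mul_of_nonneg_right ha (sq_nonneg (v a - μ))
  have hB := mul_le_mul_of_nonneg_right hb (sq_nonneg (v b - μ))
  nlinarith [mul_nonneg hζ (sq_nonneg (v a + v b - 2 * μ))]

lemma half_mul_sum_sq_gaps_le {n : Type*} [Fintype n] {A : Matrix n n ℝ} (hA : ∀ i j, 0 ≤ A i j)
    {ζ : ℝ} (hζ : 0 ≤ ζ) {i : n} (hdiag : ζ ≤ A i i) (hedge : ∀ j, IsEdge A i j → ζ ≤ A i j)
    {s : ℕ → ℝ} (hs : Monotone s) {x : n → ℝ} (μ : ℝ) {F : Finset ℕ}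
    (hF : ∀ ℓ ∈ F, ∃ j, IsEdge A i j ∧ s (ℓ + 1) ≤ x i ∧ x j ≤ s ℓ) :
    ζ / 2 * ∑ ℓ ∈ F, (s (ℓ + 1) - s ℓ) ^ 2 ≤ ∑ j, A i j * (x j - μ) ^ 2 := by
  rcases F.eq_empty_or_nonempty with rfl | hne
  · simpa using sum_nonneg fun j _ => mul_nonneg (hA i j) (sq_nonneg (x j - μ))
  -- the edge crossing the lowest gap of `F` spans all the gaps of `F`
  obtain ⟨j, hij, hsi, hjs⟩ := hF _ (F.min'_mem hne)
  have hgaps : ∑ ℓ ∈ F, (s (ℓ + 1) - s ℓ) ^ 2 ≤ (x i - x j) ^ 2 := by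
    refine sum_sq_sub_le_sq_of_monotone hs (fun ℓ hℓ => ⟨hjs.trans (hs (F.min'_le ℓ hℓ)), ?_⟩)
      (hjs.trans ((hs (Nat.le_succ _)).trans hsi))
    obtain ⟨-, -, h, -⟩ := hF ℓ hℓ
    exact h
  calc ζ / 2 * ∑ ℓ ∈ F, (s (ℓ + 1) - s ℓ) ^ 2 ≤ ζ / 2 * (x i - x j) ^ 2 := by gcongr
    _ ≤ ∑ j, A i j * (x j - μ) ^ 2 :=
        half_mul_sq_sub_le_sum_mul_sq μ hζ (hA i) hij.1 hdiag (hedge j hij)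

section SortedVal

variable {m : ℕ} [NeZero m]

noncomputable def sortedVal (x : Fin m → ℝ) (ℓ : ℕ) : ℝ :=
  x (Tuple.sort x ⟨min ℓ (m - 1), by have := NeZero.pos m; omega⟩)

lemma monotone_sortedVal (x : Fin m → ℝ) : Monotone (sortedVal x) := fun _ _ hab =>
  Tuple.monotone_sort x (Fin.mk_le_mk.2 (min_le_min_right _ hab))

lemma sortedVal_symm_sort (x : Fin m → ℝ) (i : Fin m) :
    sortedVal x ((Tuple.sort x).symm i) = x i := by
  have hlt := ((Tuple.sort x).symm i).isLt
  simp only [sortedVal, min_eq_left (Nat.le_sub_one_of_lt hlt), Fin.eta, Equiv.apply_symm_apply]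

lemma le_sortedVal_or_sortedVal_succ_le (x : Fin m → ℝ) (ℓ : ℕ) (i : Fin m) :
    x i ≤ sortedVal x ℓ ∨ sortedVal x (ℓ + 1) ≤ x i := by
  rw [← sortedVal_symm_sort x i]
  rcases le_or_gt ((Tuple.sort x).symm i : ℕ) ℓ with h | h
  exacts [.inl (monotone_sortedVal x h), .inr (monotone_sortedVal x h)]

lemma sortedVal_zero_le (x : Fin m → ℝ) (i : Fin m) : sortedVal x 0 ≤ x i :=
  sortedVal_symm_sort x i ▸ monotone_sortedVal x (Nat.zero_le _)

lemma le_sortedVal_sub_one (x : Fin m → ℝ) (i : Fin m) : x i ≤ sortedVal x (m - 1) :=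
  sortedVal_symm_sort x i ▸ monotone_sortedVal x (Nat.le_sub_one_of_lt ((Tuple.sort x).symm i).isLt)

lemma sumSqDev_le_sq_mul_sum_sq_gaps (x : Fin m → ℝ) :
    sumSqDev x ≤ m ^ 2 * ∑ ℓ ∈ range (m - 1), (sortedVal x (ℓ + 1) - sortedVal x ℓ) ^ 2 := by
  set s := sortedVal x
  have hwidth : ∀ i, (x i - s 0) ^ 2 ≤ (s (m - 1) - s 0) ^ 2 := fun i =>
    pow_le_pow_left₀ (sub_nonneg.2 (sortedVal_zero_le x i))
      (sub_le_sub_right (le_sortedVal_sub_one x i) _) 2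
  have hcs := sq_sum_le_card_mul_sum_sq (s := range (m - 1)) (f := fun ℓ => s (ℓ + 1) - s ℓ)
  rw [sum_range_sub s, card_range] at hcs
  have hm : ((m - 1 : ℕ) : ℝ) ≤ m := by exact_mod_cast Nat.sub_le m 1
  have hgaps : 0 ≤ ∑ ℓ ∈ range (m - 1), (s (ℓ + 1) - s ℓ) ^ 2 := sum_nonneg fun _ _ => sq_nonneg _
  calc sumSqDev x ≤ ∑ i, (x i - s 0) ^ 2 := sumSqDev_le_sum_sq_sub x _
    _ ≤ ∑ _i : Fin m, (s (m - 1) - s 0) ^ 2 := sum_le_sum fun i _ => hwidth i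
    _ = m * (s (m - 1) - s 0) ^ 2 := by simp
    _ ≤ m * ((m - 1 : ℕ) * ∑ ℓ ∈ range (m - 1), (s (ℓ + 1) - s ℓ) ^ 2) := by gcongr
    _ ≤ m ^ 2 * ∑ ℓ ∈ range (m - 1), (s (ℓ + 1) - s ℓ) ^ 2 := by
        rw [sq, mul_assoc]; gcongr

lemma exists_isEdge_across_sortedVal_gap {Q : ℕ → Matrix (Fin m) (Fin m) ℝ} {w : ℕ → Fin m → ℝ}
    {B : ℕ} (hQ : ∀ r < B, Q r ∈ rowStochastic ℝ (Fin m)) (hw : ∀ r < B, w (r + 1) = Q r *ᵥ w r)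
    (hconn : ∀ u v, Relation.ReflTransGen (fun c d => ∃ r < B, IsEdge (Q r) c d) u v) {ℓ : ℕ}
    (hgap : sortedVal (w 0) ℓ < sortedVal (w 0) (ℓ + 1)) :
    ∃ r < B, ∃ i j, IsEdge (Q r) i j ∧ sortedVal (w 0) (ℓ + 1) ≤ w r i ∧
      w r j ≤ sortedVal (w 0) ℓ :=
  exists_isEdge_across_cut hQ hw hconn (le_sortedVal_or_sortedVal_succ_le (w 0) ℓ)
    (u := Tuple.sort (w 0) _) le_rfl (v := Tuple.sort (w 0) _) (not_le.2 hgap)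

end SortedVal

theorem Finset.sum_le_sum_sum_filter_of_cover {ι κ : Type*} {s : Finset ι} {t : Finset κ}
    {R : κ → ι → Prop} [∀ k, DecidablePred (R k)] {f : ι → ℝ} (hf : ∀ i ∈ s, 0 ≤ f i)
    (hcov : ∀ i ∈ s, f i ≠ 0 → ∃ k ∈ t, R k i) :
    ∑ i ∈ s, f i ≤ ∑ k ∈ t, ∑ i ∈ s with R k i, f i := by
  classical
  calc ∑ i ∈ s, f i ≤ ∑ i ∈ s, ∑ _k ∈ t with R _k i, f i := sum_le_sum fun i hi => by
        by_cases h0 : f i = 0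
        · simp [h0]
        obtain ⟨k, hk, hR⟩ := hcov i hi h0
        exact single_le_sum (f := fun _ => f i) (fun _ _ => hf i hi) (mem_filter.2 ⟨hk, hR⟩)
    _ = _ := sum_comm' fun i k => by simp only [mem_filter]; tauto

section Block

variable {m : ℕ} [NeZero m] {Q : ℕ → Matrix (Fin m) (Fin m) ℝ} {w : ℕ → Fin m → ℝ} {B : ℕ}
  {ζ : ℝ}

lemma half_mul_sum_sq_sortedVal_gaps_le (hζ : 0 ≤ ζ)
    (hQ : ∀ r < B, Q r ∈ doublyStochastic ℝ (Fin m))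
    (hdiag : ∀ r < B, ∀ i, ζ ≤ Q r i i)
    (hedge : ∀ r < B, ∀ i j, IsEdge (Q r) i j → ζ ≤ Q r i j)
    (hconn : ∀ u v, Relation.ReflTransGen (fun c d => ∃ r < B, IsEdge (Q r) c d) u v)
    (hw : ∀ r < B, w (r + 1) = Q r *ᵥ w r) :
    ζ / 2 * ∑ ℓ ∈ range (m - 1), (sortedVal (w 0) (ℓ + 1) - sortedVal (w 0) ℓ) ^ 2
      ≤ ∑ r ∈ range B, dissipation (Q r) (w r) := by
  classical
  set s := sortedVal (w 0)
  have hs : Monotone s := monotone_sortedVal (w 0)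
  have hrowSt : ∀ r < B, Q r ∈ rowStochastic ℝ (Fin m) := fun r hr =>
    (mem_doublyStochastic_iff_mem_rowStochastic_and_mem_colStochastic.1 (hQ r hr)).1
  have hcover : ∀ ℓ ∈ range (m - 1), (s (ℓ + 1) - s ℓ) ^ 2 ≠ 0 →
      ∃ p ∈ range B ×ˢ (univ : Finset (Fin m)),
        ∃ j, IsEdge (Q p.1) p.2 j ∧ s (ℓ + 1) ≤ w p.1 p.2 ∧ w p.1 j ≤ s ℓ := by
    intro ℓ _ hgap
    have hlt : s ℓ < s (ℓ + 1) :=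
      (hs (Nat.le_add_right ℓ 1)).lt_of_ne fun h => hgap (by rw [h, sub_self, sq, mul_zero])
    obtain ⟨r, hr, i, j, hij, hi, hj⟩ := exists_isEdge_across_sortedVal_gap hrowSt hw hconn hlt
    exact ⟨(r, i), mem_product.2 ⟨mem_range.2 hr, mem_univ _⟩, j, hij, hi, hj⟩
  -- charge every positive gap to the row, at its step, of the upper end of an edge crossing it
  calc _ ≤ ζ / 2 * ∑ p ∈ range B ×ˢ (univ : Finset (Fin m)), ∑ ℓ ∈ range (m - 1) with
          ∃ j, IsEdge (Q p.1) p.2 j ∧ s (ℓ + 1) ≤ w p.1 p.2 ∧ w p.1 j ≤ s ℓ,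
          (s (ℓ + 1) - s ℓ) ^ 2 := by
        gcongr
        exact sum_le_sum_sum_filter_of_cover (fun _ _ => sq_nonneg _) hcover
    _ ≤ ∑ p ∈ range B ×ˢ (univ : Finset (Fin m)),
          ∑ j, Q p.1 p.2 j * (w p.1 j - (Q p.1 *ᵥ w p.1) p.2) ^ 2 := by
        rw [mul_sum]
        refine sum_le_sum fun p hp => ?_
        have hr := mem_range.1 (mem_product.1 hp).1
        exact half_mul_sum_sq_gaps_le
          (fun i j => nonneg_of_mem_doublyStochastic (hQ p.1 hr) (i := i) (j := j)) hζ
          (hdiag p.1 hr p.2) (hedge p.1 hr p.2) hs _ fun ℓ hℓ => (mem_filter.1 hℓ).2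
    _ = ∑ r ∈ range B, dissipation (Q r) (w r) := by rw [sum_product]; rfl

theorem sumSqDev_le_of_connected_block (hζ : 0 ≤ ζ)
    (hQ : ∀ r < B, Q r ∈ doublyStochastic ℝ (Fin m))
    (hdiag : ∀ r < B, ∀ i, ζ ≤ Q r i i)
    (hedge : ∀ r < B, ∀ i j, IsEdge (Q r) i j → ζ ≤ Q r i j)
    (hconn : ∀ u v, Relation.ReflTransGen (fun c d => ∃ r < B, IsEdge (Q r) c d) u v)
    (hw : ∀ r < B, w (r + 1) = Q r *ᵥ w r) :
    sumSqDev (w B) ≤ (1 - ζ / (2 * m ^ 2)) * sumSqDev (w 0) := by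
  have hdrop := half_mul_sum_sq_sortedVal_gaps_le hζ hQ hdiag hedge hconn hw
  have hV : ζ / (2 * m ^ 2) * sumSqDev (w 0) ≤ ζ / 2 * ∑ ℓ ∈ range (m - 1),
      (sortedVal (w 0) (ℓ + 1) - sortedVal (w 0) ℓ) ^ 2 :=
    calc _ ≤ ζ / (2 * m ^ 2) * (m ^ 2 * ∑ ℓ ∈ range (m - 1),
          (sortedVal (w 0) (ℓ + 1) - sortedVal (w 0) ℓ) ^ 2) := by
          gcongr; exact sumSqDev_le_sq_mul_sum_sq_gaps (w 0)
      _ = _ := by field_simp [NeZero.ne m]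
  rw [sumSqDev_eq_sub_sum_dissipation hQ hw]
  linarith

end Block

lemma le_pow_mul_of_antitone_of_contract {f : ℕ → ℝ} (hf : Antitone f) {c : ℝ} (hc : 0 ≤ c)
    {B s₀ : ℕ} (hstep : ∀ p, f (s₀ + (p + 1) * B) ≤ c * f (s₀ + p * B)) (n : ℕ) :
    f n ≤ c ^ ((n - s₀) / B) * f 0 := by
  have hgeom : ∀ p, f (s₀ + p * B) ≤ c ^ p * f s₀ := by
    intro p
    induction p with
    | zero => simp
    | succ p ih =>
      calc f (s₀ + (p + 1) * B) ≤ c * f (s₀ + p * B) := hstep p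
        _ ≤ c * (c ^ p * f s₀) := mul_le_mul_of_nonneg_left ih hc
        _ = c ^ (p + 1) * f s₀ := by ring
  rcases lt_or_ge n s₀ with hn | hn
  · rw [Nat.sub_eq_zero_of_le hn.le, Nat.zero_div, pow_zero, one_mul]
    exact hf (Nat.zero_le n)
  · calc f n ≤ f (s₀ + (n - s₀) / B * B) :=
          hf (by have := Nat.div_mul_le_self (n - s₀) B; omega)
      _ ≤ c ^ ((n - s₀) / B) * f s₀ := hgeom _
      _ ≤ c ^ ((n - s₀) / B) * f 0 := by gcongr; exact hf (Nat.zero_le _)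

lemma pow_le_inv_sq_mul_rpow_pow {ρ : ℝ} (hρ₀ : 0 < ρ) (hρ₁ : ρ ≤ 1) {p n B : ℕ}
    (hn : n ≤ (p + 2) * B) : ρ ^ p ≤ (ρ⁻¹) ^ 2 * (ρ ^ ((1 : ℝ) / B)) ^ n := by
  have hexp : (n : ℝ) / B ≤ p + 2 :=
    div_le_of_le_mul₀ (Nat.cast_nonneg _) (by positivity) (by exact_mod_cast hn)
  rw [← Real.rpow_natCast (ρ ^ _) n, ← Real.rpow_mul hρ₀.le]
  calc ρ ^ p = (ρ⁻¹) ^ 2 * ρ ^ (p + 2) := by field_simp; ring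
    _ ≤ (ρ⁻¹) ^ 2 * ρ ^ ((1 : ℝ) / B * n) := by
        gcongr
        rw [← Real.rpow_natCast]
        refine Real.rpow_le_rpow_of_exponent_ge hρ₀ hρ₁ ?_
        rw [one_div_mul_eq_div]
        exact_mod_cast hexp

lemma le_div_add_two_mul {B s₀ : ℕ} (hB : 0 < B) (hs₀ : s₀ ≤ B) (n : ℕ) :
    n ≤ ((n + 1 - s₀) / B + 2) * B := by
  have hdiv := Nat.div_add_mod (n + 1 - s₀) B
  have hmod := Nat.mod_lt (n + 1 - s₀) hB
  have hmul : ((n + 1 - s₀) / B + 2) * B = B * ((n + 1 - s₀) / B) + 2 * B := by ring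
  omega

def traj {n : Type*} [Fintype n] (P : ℕ → Matrix n n ℝ) (τ : ℕ) (x : n → ℝ) : ℕ → n → ℝ
  | 0 => x
  | s + 1 => P (τ + s) *ᵥ traj P τ x s

lemma traj_succ_eq_matrixProd_mulVec {m : ℕ} (P : ℕ → Matrix (Fin m) (Fin m) ℝ) (τ : ℕ)
    (x : Fin m → ℝ) (k : ℕ) : traj P τ x (k + 1) = matrixProd P τ k *ᵥ x := by
  induction k with
  | zero => rfl
  | succ k ih => rw [traj, ih, mulVec_mulVec]; rfl

lemma matrixProd_apply_eq_traj {m : ℕ} (P : ℕ → Matrix (Fin m) (Fin m) ℝ) (τ k : ℕ)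
    (i j : Fin m) : matrixProd P τ k i j = traj P τ (Pi.single j 1) (k + 1) i := by
  rw [traj_succ_eq_matrixProd_mulVec, mulVec_single_one]
  rfl

structure ConnectivityAssumption {m : ℕ} (P : ℕ → Matrix (Fin m) (Fin m) ℝ) (ζ : ℝ) (B : ℕ) :
    Prop where
  mem_doublyStochastic : ∀ t, 1 ≤ t → P t ∈ doublyStochastic ℝ (Fin m)
  zeta_pos : 0 < ζ
  diag_ge : ∀ t, 1 ≤ t → ∀ i, ζ ≤ P t i i
  edge_ge : ∀ t, 1 ≤ t → ∀ i j, IsEdge (P t) i j → ζ ≤ P t i j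
  one_le_period : 1 ≤ B
  connected : ∀ k i j, Relation.ReflTransGen
    (fun a b => ∃ t, k * B + 1 ≤ t ∧ t ≤ (k + 1) * B ∧ IsEdge (P t) a b) i j

namespace ConnectivityAssumption

variable {m : ℕ} {P : ℕ → Matrix (Fin m) (Fin m) ℝ} {ζ : ℝ} {B τ : ℕ}

lemma zeta_le_one [NeZero m] (h : ConnectivityAssumption P ζ B) : ζ ≤ 1 :=
  (h.diag_ge 1 le_rfl 0).trans (le_one_of_mem_doublyStochastic (h.mem_doublyStochastic 1 le_rfl))

lemma div_two_mul_sq_le_half [NeZero m] (h : ConnectivityAssumption P ζ B) :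
    ζ / (2 * m ^ 2) ≤ 1 / 2 := by
  have hm : (1 : ℝ) ≤ m := Nat.one_le_cast.2 NeZero.one_le
  rw [div_le_div_iff₀ (by positivity) two_pos]
  nlinarith [h.zeta_le_one]

lemma sum_traj (h : ConnectivityAssumption P ζ B) (hτ : 1 ≤ τ) (x : Fin m → ℝ) (s : ℕ) :
    ∑ i, traj P τ x s i = ∑ i, x i := by
  induction s with
  | zero => rfl
  | succ s ih =>
    rw [traj, sum_mulVec_of_mem_doublyStochastic (h.mem_doublyStochastic _ (by omega)), ih]

lemma antitone_sumSqDev_traj (h : ConnectivityAssumption P ζ B) (hτ : 1 ≤ τ) (x : Fin m → ℝ) :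
    Antitone fun s => sumSqDev (traj P τ x s) :=
  antitone_nat_of_succ_le fun _ => sumSqDev_mulVec_le (h.mem_doublyStochastic _ (by omega)) _

lemma sumSqDev_traj_add_le [NeZero m] (h : ConnectivityAssumption P ζ B) {k s : ℕ}
    (hs : τ + s = k * B + 1) (x : Fin m → ℝ) :
    sumSqDev (traj P τ x (s + B)) ≤ (1 - ζ / (2 * m ^ 2)) * sumSqDev (traj P τ x s) := by
  refine sumSqDev_le_of_connected_block (Q := fun r => P (k * B + 1 + r))
    (w := fun r => traj P τ x (s + r)) h.zeta_pos.le
    (fun r _ => h.mem_doublyStochastic _ (by omega)) (fun r _ => h.diag_ge _ (by omega))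
    (fun r _ => h.edge_ge _ (by omega)) (fun u v => ?_) (fun r _ => ?_)
  · refine Relation.ReflTransGen.mono (fun c d hcd => ?_) u v (h.connected k u v)
    obtain ⟨t, ht₁, ht₂, hcd⟩ := hcd
    have hB : (k + 1) * B = k * B + B := by ring
    refine ⟨t - (k * B + 1), by omega, ?_⟩
    rwa [show k * B + 1 + (t - (k * B + 1)) = t by omega]
  · show P (τ + (s + r)) *ᵥ traj P τ x (s + r) = _
    rw [show τ + (s + r) = k * B + 1 + r by omega]

lemma sumSqDev_traj_le [NeZero m] (h : ConnectivityAssumption P ζ B) (hτ : 1 ≤ τ)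
    (x : Fin m → ℝ) (n : ℕ) :
    sumSqDev (traj P τ x n)
      ≤ (1 - ζ / (2 * m ^ 2)) ^ ((n - (B - (τ - 1) % B)) / B) * sumSqDev x := by
  have hB := h.one_le_period
  have hc : 0 ≤ 1 - ζ / (2 * m ^ 2) := by linarith [h.div_two_mul_sq_le_half]
  refine le_pow_mul_of_antitone_of_contract (h.antitone_sumSqDev_traj hτ x) hc (fun p => ?_) n
  -- the block `k = (τ - 1) / B + 1 + p` starts right after step `B - (τ - 1) % B + p * B`
  have hdiv := Nat.div_add_mod (τ - 1) B
  have hmod := Nat.mod_lt (τ - 1) (show 0 < B by omega)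
  have hk : ((τ - 1) / B + 1 + p) * B = B * ((τ - 1) / B) + B + p * B := by ring
  have hstep := h.sumSqDev_traj_add_le (τ := τ) (k := (τ - 1) / B + 1 + p)
    (s := B - (τ - 1) % B + p * B) (by omega) x
  rwa [add_assoc, ← add_one_mul] at hstep

theorem abs_matrixProd_sub_le (h : ConnectivityAssumption P ζ B) {t : ℕ} (hτ : 1 ≤ τ)
    (i j : Fin m) :
    |matrixProd P τ (t - τ) i j - 1 / m|
      ≤ ((1 - ζ / (4 * m ^ 2))⁻¹) ^ 2 * ((1 - ζ / (4 * m ^ 2)) ^ ((1 : ℝ) / B)) ^ (t - τ) := by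
  have : NeZero m := ⟨i.pos.ne'⟩
  set δ := ζ / (2 * m ^ 2) with hδ
  set ρ := 1 - ζ / (4 * m ^ 2) with hρδ
  set p := (t - τ + 1 - (B - (τ - 1) % B)) / B
  set y := traj P τ (Pi.single j 1) (t - τ + 1)
  have hρ : ρ = 1 - δ / 2 := by rw [hρδ, hδ]; ring
  have hm : (0 : ℝ) < m := Nat.cast_pos.2 (NeZero.pos m)
  have hδ₀ : 0 < δ := div_pos h.zeta_pos (by positivity)
  have hδ₁ : δ ≤ 1 / 2 := h.div_two_mul_sq_le_half
  have hvar : sumSqDev y ≤ (ρ ^ p) ^ 2 := calc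
    sumSqDev y ≤ (1 - δ) ^ p * sumSqDev (Pi.single j 1 : Fin m → ℝ) := h.sumSqDev_traj_le hτ _ _
    _ ≤ (ρ ^ 2) ^ p * 1 :=
        mul_le_mul (pow_le_pow_left₀ (by linarith) (by rw [hρ]; nlinarith) p)
          (sumSqDev_single_le_one j) (sumSqDev_nonneg _) (by positivity)
    _ = (ρ ^ p) ^ 2 := by rw [mul_one, ← pow_mul, ← pow_mul, mul_comm]
  have hdev := sq_sub_mean_le_sumSqDev y i
  rw [h.sum_traj hτ, sum_pi_single', if_pos (mem_univ j), Fintype.card_fin] at hdev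
  rw [matrixProd_apply_eq_traj]
  refine (abs_le_of_sq_le_sq (hdev.trans hvar) (pow_nonneg (by linarith) _)).trans
    (pow_le_inv_sq_mul_rpow_pow (by linarith) (by linarith) ?_)
  exact le_div_add_two_mul h.one_le_period (Nat.sub_le B _) _

end ConnectivityAssumption

theorem mixing_bound_of_connectivity_general
    {m : ℕ}
    (P : ℕ → Matrix (Fin m) (Fin m) ℝ)
    (ζ : ℝ) (hζ : 0 < ζ) (B : ℕ) (hB : 1 ≤ B)
    (hnonneg : ∀ t, 1 ≤ t → ∀ i j, 0 ≤ P t i j)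
    (hrow : ∀ t, 1 ≤ t → ∀ i, ∑ j, P t i j = 1)
    (hcol : ∀ t, 1 ≤ t → ∀ j, ∑ i, P t i j = 1)
    (hdiag : ∀ t, 1 ≤ t → ∀ i, ζ ≤ P t i i)
    (hedge : ∀ t, 1 ≤ t → ∀ i j : Fin m, i ≠ j →
      (0 < P t i j ∨ 0 < P t j i) → ζ ≤ P t i j)
    (hconn : ∀ k : ℕ, ∀ i j : Fin m,
      Relation.ReflTransGen
        (fun a b => a ≠ b ∧ ∃ t, k * B + 1 ≤ t ∧ t ≤ (k + 1) * B ∧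
          (0 < P t a b ∨ 0 < P t b a)) i j)
    (ϑ κ : ℝ)
    (hϑ : ϑ = ((1 - ζ / (4 * (m : ℝ) ^ 2))⁻¹) ^ 2)
    (hκ : κ = (1 - ζ / (4 * (m : ℝ) ^ 2)) ^ ((1 : ℝ) / (B : ℝ))) :
    ∀ (t τ : ℕ), 1 ≤ τ → τ ≤ t → ∀ i j : Fin m,
      |matrixProd P τ (t - τ) i j - 1 / (m : ℝ)| ≤ ϑ * κ ^ (t - τ) := by
  have h : ConnectivityAssumption P ζ B :=
    { mem_doublyStochastic := fun t ht =>
        mem_doublyStochastic_iff_sum.2 ⟨hnonneg t ht, hrow t ht, hcol t ht⟩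
      zeta_pos := hζ
      diag_ge := hdiag
      edge_ge := fun t ht i j hij => hedge t ht i j hij.1 hij.2
      one_le_period := hB
      connected := fun k i j => Relation.ReflTransGen.mono
        (fun _ _ ⟨hab, t, ht₁, ht₂, hpos⟩ => ⟨t, ht₁, ht₂, hab, hpos⟩) i j (hconn k i j) }
  intro t τ hτ _ i j
  subst hϑ hκ
  exact h.abs_matrixProd_sub_le hτ i j

/-- Geometric mixing of products of doubly stochastic matrices
under the connectivity assumption: each `P t` (for `t ≥ 1`) is doubly stochastic,
has diagonal entries `≥ ζ` and entries `≥ ζ` on edges `{i,j} ∈ E_t`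
(where `E_t = {{i,j} : P t i j > 0}`), and the graph with edge set
`E_{kB+1} ∪ ⋯ ∪ E_{(k+1)B}` is strongly connected for every `k ≥ 0`.  Then
`|P(t,τ)_{ij} − 1/m| ≤ ϑ κ^(t−τ)` with `ϑ = (1 − ζ/(4m²))⁻²` and
`κ = (1 − ζ/(4m²))^(1/B)`. -/
theorem mixing_bound_of_connectivity
    {m : ℕ} (hm : 1 ≤ m)
    (P : ℕ → Matrix (Fin m) (Fin m) ℝ)
    (ζ : ℝ) (hζ : 0 < ζ) (B : ℕ) (hB : 1 ≤ B)
    (hnonneg : ∀ t, 1 ≤ t → ∀ i j, 0 ≤ P t i j)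
    (hrow : ∀ t, 1 ≤ t → ∀ i, ∑ j, P t i j = 1)
    (hcol : ∀ t, 1 ≤ t → ∀ j, ∑ i, P t i j = 1)
    (hdiag : ∀ t, 1 ≤ t → ∀ i, ζ ≤ P t i i)
    (hedge : ∀ t, 1 ≤ t → ∀ i j : Fin m, i ≠ j →
      (0 < P t i j ∨ 0 < P t j i) → ζ ≤ P t i j)
    (hconn : ∀ k : ℕ, ∀ i j : Fin m,
      Relation.ReflTransGen
        (fun a b => a ≠ b ∧ ∃ t, k * B + 1 ≤ t ∧ t ≤ (k + 1) * B ∧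
          (0 < P t a b ∨ 0 < P t b a)) i j)
    (ϑ κ : ℝ)
    (hϑ : ϑ = ((1 - ζ / (4 * (m : ℝ) ^ 2))⁻¹) ^ 2)
    (hκ : κ = (1 - ζ / (4 * (m : ℝ) ^ 2)) ^ ((1 : ℝ) / (B : ℝ))) :
    ∀ (t τ : ℕ), 1 ≤ τ → τ ≤ t → ∀ i j : Fin m,
      |matrixProd P τ (t - τ) i j - 1 / (m : ℝ)| ≤ ϑ * κ ^ (t - τ) :=
  mixing_bound_of_connectivity_general P ζ hζ B hB hnonneg hrow hcol hdiag hedge hconn ϑ κ hϑ hκ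
end

section
/- Fix m ≥ 1, η > 0, G_l ≥ 0, ϑ ≥ 1 and κ ∈ (0,1). Let (P(t))_{t≥0} be m×m doubly stochastic matrices whose products satisfy the mixing bound |[P(t)P(t−1)⋯P(s)]_{ij} − 1/m| ≤ ϑ κ^{t−s} for all i, j and all t ≥ s. Let z_{i,t}, g_{i,t} ∈ ℝ^d satisfy z_{i,t+1} = ∑_{j=1}^m P(t)_{ij} z_{j,t} − η g_{i,t} with ‖g_{i,t}‖ ≤ G_l for all i, t, and set z̄_t = (1/m) ∑_{j=1}^m z_{j,t}. Then for every device i and every t ≥ 1, ‖z_{i,t} − z̄_t‖ ≤ ϑ ( κ^{t−1} ∑_{j=1}^m ‖z_{j,0}‖ + mηG_l/(1−κ) + 2ηG_l ). -/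
/-- Consensus bound in mirror coordinates.  If the products of the
doubly stochastic matrices `P t` satisfy the mixing bound
`|[P(t)⋯P(s)]_{ij} − 1/m| ≤ ϑ κ^(t−s)`, the iterates satisfy
`z i (t+1) = ∑ j, P t i j • z j t − η • g i t` with `‖g i t‖ ≤ G_l`, and
`z̄ t = (1/m) ∑ j, z j t`, then for every `i` and every `t ≥ 1`,
`‖z i t − z̄ t‖ ≤ ϑ (κ^(t−1) ∑ j, ‖z j 0‖ + mηG_l/(1−κ) + 2ηG_l)`. -/
theorem consensus_bound_of_mixing
    {m d : ℕ} (hm : 1 ≤ m)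
    (η G_l ϑ κ : ℝ) (hη : 0 < η) (hG : 0 ≤ G_l) (hϑ : 1 ≤ ϑ)
    (hκ0 : 0 < κ) (hκ1 : κ < 1)
    (P : ℕ → Matrix (Fin m) (Fin m) ℝ)
    (hnonneg : ∀ t, ∀ i j, 0 ≤ P t i j)
    (hrow : ∀ t, ∀ i, ∑ j, P t i j = 1)
    (hcol : ∀ t, ∀ j, ∑ i, P t i j = 1)
    (hmix : ∀ t s : ℕ, s ≤ t → ∀ i j : Fin m,
      |matrixProd P s (t - s) i j - 1 / (m : ℝ)| ≤ ϑ * κ ^ (t - s))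
    (z g : Fin m → ℕ → EuclideanSpace ℝ (Fin d))
    (hrec : ∀ i t, z i (t + 1) = (∑ j, P t i j • z j t) - η • g i t)
    (hgbound : ∀ i t, ‖g i t‖ ≤ G_l) :
    ∀ (i : Fin m) (t : ℕ), 1 ≤ t →
      ‖z i t - (1 / (m : ℝ)) • ∑ j, z j t‖
        ≤ ϑ * (κ ^ (t - 1) * (∑ j, ‖z j 0‖)
            + (m : ℝ) * η * G_l / (1 - κ) + 2 * η * G_l) := by
  have hm0 : (0:ℝ) < (m:ℝ) := by exact_mod_cast hm
  -- closed form for z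
  have hz : ∀ (i : Fin m) (n : ℕ), z i (n+1) =
      (∑ j, matrixProd P 0 n i j • z j 0)
      - η • (∑ s ∈ Finset.range n, ∑ j, matrixProd P (s+1) (n-1-s) i j • g j s)
      - η • g i n := by
    intro i n
    induction n generalizing i with
    | zero => simp [hrec, matrixProd]
    | succ n ih =>
      have key : (∑ j, P (n+1) i j • z j (n+1)) =
          (∑ j, matrixProd P 0 (n+1) i j • z j 0)
          - η • (∑ s ∈ Finset.range (n+1), ∑ j, matrixProd P (s+1) (n-s) i j • g j s) := by
        have hQ0 : matrixProd P 0 (n+1) = P (n+1) * matrixProd P 0 n := by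
          show matrixProd P 0 (n+1) = _
          rw [matrixProd]
          norm_num
        have hQs : ∀ s ∈ Finset.range n,
            matrixProd P (s+1) (n-s) = P (n+1) * matrixProd P (s+1) (n-1-s) := by
          intro s hs
          rw [Finset.mem_range] at hs
          rw [show n - s = (n-1-s) + 1 from by omega, matrixProd,
            show s + 1 + (n-1-s) + 1 = n + 1 from by omega]
        calc (∑ j, P (n+1) i j • z j (n+1))
            = ∑ j, (P (n+1) i j • (∑ k, matrixProd P 0 n j k • z k 0)
              - η • (P (n+1) i j • (∑ s ∈ Finset.range n,
                  ∑ k, matrixProd P (s+1) (n-1-s) j k • g k s))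
              - η • (P (n+1) i j • g j n)) := by
              refine Finset.sum_congr rfl fun j _ => ?_
              rw [ih j]
              rw [smul_sub, smul_sub, smul_comm (P (n+1) i j) η,
                smul_comm (P (n+1) i j) η]
          _ = (∑ j, P (n+1) i j • (∑ k, matrixProd P 0 n j k • z k 0))
              - η • (∑ j, P (n+1) i j • (∑ s ∈ Finset.range n,
                  ∑ k, matrixProd P (s+1) (n-1-s) j k • g k s))
              - η • (∑ j, P (n+1) i j • g j n) := by
              rw [Finset.sum_sub_distrib, Finset.sum_sub_distrib, Finset.smul_sum,
                Finset.smul_sum]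
          _ = (∑ k, matrixProd P 0 (n+1) i k • z k 0)
              - η • (∑ s ∈ Finset.range n, ∑ k, matrixProd P (s+1) (n-s) i k • g k s)
              - η • (∑ k, P (n+1) i k • g k n) := by
              congr 1
              · congr 1
                · -- first sum
                  simp_rw [Finset.smul_sum, smul_smul]
                  rw [Finset.sum_comm]
                  refine Finset.sum_congr rfl fun k _ => ?_
                  rw [← Finset.sum_smul, hQ0, Matrix.mul_apply]
                · -- middle sum
                  congr 1
                  simp_rw [Finset.smul_sum, smul_smul]
                  rw [Finset.sum_comm]
                  refine Finset.sum_congr rfl fun s hs => ?_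
                  rw [Finset.sum_comm]
                  refine Finset.sum_congr rfl fun k _ => ?_
                  rw [← Finset.sum_smul, hQs s hs, Matrix.mul_apply]
          _ = (∑ j, matrixProd P 0 (n+1) i j • z j 0)
              - η • (∑ s ∈ Finset.range (n+1), ∑ j, matrixProd P (s+1) (n-s) i j • g j s) := by
              rw [Finset.sum_range_succ, smul_add, sub_sub]
              congr 3
              refine Finset.sum_congr rfl fun k _ => ?_
              congr 2
              rw [show n - n = 0 from by omega]
              rfl
      rw [hrec, key]
      simp only [Nat.add_sub_cancel]
  -- average formula
  have hav : ∀ n : ℕ, (∑ j, z j n) =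
      (∑ j, z j 0) - η • ∑ s ∈ Finset.range n, ∑ j, g j s := by
    intro n
    induction n with
    | zero => simp
    | succ n ih =>
      have step : ∑ j, z j (n+1) = (∑ j, z j n) - η • ∑ j, g j n := by
        simp_rw [hrec]
        rw [Finset.sum_sub_distrib, ← Finset.smul_sum]
        congr 1
        rw [Finset.sum_comm]
        refine Finset.sum_congr rfl fun k _ => ?_
        rw [← Finset.sum_smul, hcol, one_smul]
      rw [step, ih, Finset.sum_range_succ, smul_add]
      abel
  intro i t ht
  obtain ⟨n, rfl⟩ : ∃ n, t = n + 1 := ⟨t - 1, by omega⟩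
  have hconst : ∀ c : ℝ, (∑ _j : Fin m, c) = (m:ℝ) * c := by
    intro c
    simp [Finset.sum_const, Finset.card_univ, mul_comm]
  set E1 : EuclideanSpace ℝ (Fin d) :=
    ∑ j, (matrixProd P 0 n i j - 1/(m:ℝ)) • z j 0 with hE1def
  set E2 : EuclideanSpace ℝ (Fin d) :=
    ∑ s ∈ Finset.range n, ∑ j, (matrixProd P (s+1) (n-1-s) i j - 1/(m:ℝ)) • g j s with hE2def
  set E3 : EuclideanSpace ℝ (Fin d) := g i n - (1/(m:ℝ)) • ∑ j, g j n with hE3def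
  have hdecomp : z i (n+1) - (1/(m:ℝ)) • ∑ j, z j (n+1) = E1 - η • E2 - η • E3 := by
    rw [hz i n, hav (n+1), Finset.sum_range_succ, hE1def, hE2def, hE3def]
    simp only [sub_smul, Finset.sum_sub_distrib, ← Finset.smul_sum]
    module
  rw [hdecomp]
  have h1κ : (0:ℝ) < 1 - κ := by linarith
  -- bound E1
  have hb1 : ‖E1‖ ≤ ϑ * κ ^ n * ∑ j, ‖z j 0‖ := by
    calc ‖E1‖ ≤ ∑ j, ‖(matrixProd P 0 n i j - 1/(m:ℝ)) • z j 0‖ := norm_sum_le _ _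
      _ ≤ ∑ j, ϑ * κ ^ n * ‖z j 0‖ := by
          refine Finset.sum_le_sum fun j _ => ?_
          rw [norm_smul, Real.norm_eq_abs]
          have := hmix n 0 (Nat.zero_le n) i j
          simp only [Nat.sub_zero] at this
          exact mul_le_mul_of_nonneg_right this (norm_nonneg _)
      _ = ϑ * κ ^ n * ∑ j, ‖z j 0‖ := by rw [Finset.mul_sum]
  -- bound E2
  have hb2 : ‖E2‖ ≤ (m:ℝ) * ϑ * G_l / (1 - κ) := by
    have hterm : ∀ s ∈ Finset.range n,
        ‖∑ j, (matrixProd P (s+1) (n-1-s) i j - 1/(m:ℝ)) • g j s‖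
          ≤ (m:ℝ) * (ϑ * κ ^ (n-1-s) * G_l) := by
      intro s hs
      rw [Finset.mem_range] at hs
      calc ‖∑ j, (matrixProd P (s+1) (n-1-s) i j - 1/(m:ℝ)) • g j s‖
          ≤ ∑ j, ‖(matrixProd P (s+1) (n-1-s) i j - 1/(m:ℝ)) • g j s‖ := norm_sum_le _ _
        _ ≤ ∑ _j : Fin m, ϑ * κ ^ (n-1-s) * G_l := by
            refine Finset.sum_le_sum fun j _ => ?_
            rw [norm_smul, Real.norm_eq_abs]
            have hmx := hmix n (s+1) (by omega) i j
            rw [show n - (s+1) = n - 1 - s from by omega] at hmx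
            exact mul_le_mul hmx (hgbound j s) (norm_nonneg _)
              (mul_nonneg (by linarith) (pow_nonneg hκ0.le _))
        _ = (m:ℝ) * (ϑ * κ ^ (n-1-s) * G_l) := hconst _
    calc ‖E2‖ ≤ ∑ s ∈ Finset.range n, ‖∑ j, (matrixProd P (s+1) (n-1-s) i j - 1/(m:ℝ)) • g j s‖ :=
          norm_sum_le _ _
      _ ≤ ∑ s ∈ Finset.range n, (m:ℝ) * (ϑ * κ ^ (n-1-s) * G_l) :=
          Finset.sum_le_sum hterm
      _ = (m:ℝ) * ϑ * G_l * ∑ s ∈ Finset.range n, κ ^ (n-1-s) := by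
          rw [Finset.mul_sum]; refine Finset.sum_congr rfl fun s hs => ?_; ring
      _ ≤ (m:ℝ) * ϑ * G_l * (1 / (1-κ)) := by
          refine mul_le_mul_of_nonneg_left ?_
            (by positivity)
          have hrefl : ∑ s ∈ Finset.range n, κ ^ (n-1-s) = ∑ s ∈ Finset.range n, κ ^ s := by
            rw [← Finset.sum_range_reflect]
            refine Finset.sum_congr rfl fun s hs => ?_
            rw [Finset.mem_range] at hs
            congr 1
            omega
          rw [hrefl, le_div_iff₀ h1κ]
          have hg := geom_sum_mul κ n
          have : (0:ℝ) ≤ κ ^ n := pow_nonneg hκ0.le n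
          nlinarith
      _ = (m:ℝ) * ϑ * G_l / (1-κ) := by ring
  -- bound E3
  have hb3 : ‖E3‖ ≤ 2 * G_l := by
    have hgs : ‖∑ j, g j n‖ ≤ (m:ℝ) * G_l := by
      calc ‖∑ j, g j n‖ ≤ ∑ j, ‖g j n‖ := norm_sum_le _ _
        _ ≤ ∑ _j : Fin m, G_l := Finset.sum_le_sum fun j _ => hgbound j n
        _ = (m:ℝ) * G_l := hconst _
    calc ‖E3‖ ≤ ‖g i n‖ + ‖(1/(m:ℝ)) • ∑ j, g j n‖ := norm_sub_le _ _
      _ ≤ G_l + (1/(m:ℝ)) * ((m:ℝ) * G_l) := by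
          refine add_le_add (hgbound i n) ?_
          rw [norm_smul, Real.norm_eq_abs, abs_of_pos (by positivity)]
          exact mul_le_mul_of_nonneg_left hgs (by positivity)
      _ = 2 * G_l := by field_simp; ring
  -- combine
  have htri : ‖E1 - η • E2 - η • E3‖ ≤ ‖E1‖ + η * ‖E2‖ + η * ‖E3‖ := by
    calc ‖E1 - η • E2 - η • E3‖ ≤ ‖E1 - η • E2‖ + ‖η • E3‖ := norm_sub_le _ _
      _ ≤ ‖E1‖ + ‖η • E2‖ + ‖η • E3‖ := by
          have := norm_sub_le E1 (η • E2)
          linarith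
      _ = ‖E1‖ + η * ‖E2‖ + η * ‖E3‖ := by
          rw [norm_smul, norm_smul, Real.norm_eq_abs, abs_of_pos hη]
  have hn : n + 1 - 1 = n := by omega
  rw [hn]
  have hfinal : ‖E1‖ + η * ‖E2‖ + η * ‖E3‖
      ≤ ϑ * (κ ^ n * (∑ j, ‖z j 0‖) + (m:ℝ) * η * G_l / (1-κ) + 2 * η * G_l) := by
    have h2 : η * ‖E2‖ ≤ η * ((m:ℝ) * ϑ * G_l / (1-κ)) :=
      mul_le_mul_of_nonneg_left hb2 hη.le
    have h3 : η * ‖E3‖ ≤ η * (2 * G_l) := mul_le_mul_of_nonneg_left hb3 hη.le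
    have hextra : (0:ℝ) ≤ (ϑ - 1) * (2 * η * G_l) := by
      apply mul_nonneg (by linarith); positivity
    have hd : η * ((m:ℝ) * ϑ * G_l / (1-κ)) = ϑ * ((m:ℝ) * η * G_l / (1-κ)) := by
      field_simp
    linarith only [hb1, h2, h3, hextra, hd]
  linarith
end

section
/- Let E be a real inner product space, let p ≥ 1, and define ∇φ_p(x) = ‖x‖^{p−1} x (the gradient of φ_p(x) = (1/(p+1))‖x‖^{p+1}). Then for all x, y ∈ E, ‖ ‖x‖^{p−1} x − ‖y‖^{p−1} y ‖ ≥ (1/2^{p−1}) ‖x − y‖^p. -/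
/-!
With `a = ‖x‖`, `b = ‖y‖` and `s = ‖x - y‖²`, the square `‖‖x‖^(p-1) • x - ‖y‖^(p-1) • y‖²` is an
affine function of `s`, while `(‖x - y‖^p)² = s^p` is convex in `s`. As `s` ranges over
`[(a - b)², (a + b)²]`, it suffices to compare at the two endpoints, where the inequality becomes
`|a - b|^p ≤ |a^p - b^p|` (superadditivity of `t ↦ t^p`) and `(a + b)^p ≤ 2^(p-1) (a^p + b^p)`
(the power-mean inequality).
-/

open Real Set

namespace Real

lemma rpow_sub_one_mul_self {x p : ℝ} (hx : 0 ≤ x) (hp : p ≠ 0) : x ^ (p - 1) * x = x ^ p := by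
  rw [← rpow_add_one' hx (by simpa using hp), sub_add_cancel]

lemma rpow_add_le_mul_rpow_add_rpow {p a b : ℝ} (ha : 0 ≤ a) (hb : 0 ≤ b) (hp : 1 ≤ p) :
    (a + b) ^ p ≤ 2 ^ (p - 1) * (a ^ p + b ^ p) := by
  lift a to NNReal using ha
  lift b to NNReal using hb
  exact_mod_cast NNReal.rpow_add_le_mul_rpow_add_rpow a b hp

lemma abs_sub_rpow_le_abs_rpow_sub_rpow {p a b : ℝ} (ha : 0 ≤ a) (hb : 0 ≤ b) (hp : 1 ≤ p) :
    |a - b| ^ p ≤ |a ^ p - b ^ p| := by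
  wlog hba : b ≤ a with h
  · rw [abs_sub_comm a, abs_sub_comm (a ^ p)]
    exact h hb ha hp (le_of_not_ge hba)
  have hsuper := add_rpow_le_rpow_add (sub_nonneg.2 hba) hb hp
  rw [sub_add_cancel] at hsuper
  have hpow : 0 ≤ (a - b) ^ p := rpow_nonneg (sub_nonneg.2 hba) p
  rw [abs_of_nonneg (sub_nonneg.2 hba), abs_of_nonneg (by linarith)]
  linarith

end Real

theorem norm_smul_sub_smul_sq {E : Type*} [NormedAddCommGroup E] [InnerProductSpace ℝ E]
    (α β : ℝ) (x y : E) :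
    ‖α • x - β • y‖ ^ 2
      = (α * ‖x‖ - β * ‖y‖) ^ 2 + α * β * (‖x - y‖ ^ 2 - (‖x‖ - ‖y‖) ^ 2) := by
  simp only [norm_sub_sq_real, norm_smul, real_inner_smul_left, real_inner_smul_right,
    Real.norm_eq_abs, mul_pow, sq_abs]
  ring

/-- `‖‖x‖^(p-1) • x - ‖y‖^(p-1) • y‖²` in terms of `a = ‖x‖`, `b = ‖y‖` and `s = ‖x - y‖²`. -/
noncomputable def powerGradNormSq (p a b s : ℝ) : ℝ :=
  (a ^ p - b ^ p) ^ 2 + a ^ (p - 1) * b ^ (p - 1) * (s - (a - b) ^ 2)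

theorem norm_rpow_smul_sub_rpow_smul_sq {E : Type*} [NormedAddCommGroup E]
    [InnerProductSpace ℝ E] {p : ℝ} (hp : p ≠ 0) (x y : E) :
    ‖‖x‖ ^ (p - 1) • x - ‖y‖ ^ (p - 1) • y‖ ^ 2
      = powerGradNormSq p ‖x‖ ‖y‖ (‖x - y‖ ^ 2) := by
  rw [norm_smul_sub_smul_sq, rpow_sub_one_mul_self (norm_nonneg x) hp,
    rpow_sub_one_mul_self (norm_nonneg y) hp, powerGradNormSq]

namespace powerGradNormSq

variable {p a b : ℝ}

lemma apply_sub_sq : powerGradNormSq p a b ((a - b) ^ 2) = (a ^ p - b ^ p) ^ 2 := by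
  simp [powerGradNormSq]

lemma apply_add_sq (hp : p ≠ 0) (ha : 0 ≤ a) (hb : 0 ≤ b) :
    powerGradNormSq p a b ((a + b) ^ 2) = (a ^ p + b ^ p) ^ 2 := by
  rw [powerGradNormSq, ← rpow_sub_one_mul_self ha hp, ← rpow_sub_one_mul_self hb hp]
  ring

lemma concaveOn_const_mul (c : ℝ) (t : Set ℝ) (ht : Convex ℝ t) :
    ConcaveOn ℝ t (fun s ↦ c * powerGradNormSq p a b s) := by
  refine ⟨ht, fun s _ s' _ μ ν _ _ hμν ↦ le_of_eq ?_⟩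
  simp only [powerGradNormSq, smul_eq_mul]
  linear_combination (c * ((a ^ p - b ^ p) ^ 2 - a ^ (p - 1) * b ^ (p - 1) * (a - b) ^ 2)) * hμν

end powerGradNormSq

theorem rpow_le_two_rpow_sq_mul_powerGradNormSq {p a b s : ℝ} (hp : 1 ≤ p) (ha : 0 ≤ a)
    (hb : 0 ≤ b) (hs : s ∈ Icc ((a - b) ^ 2) ((a + b) ^ 2)) :
    s ^ p ≤ (2 ^ (p - 1)) ^ 2 * powerGradNormSq p a b s := by
  have hp0 : p ≠ 0 := by positivity
  set c : ℝ := (2 ^ (p - 1)) ^ 2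
  have hc : 1 ≤ c := one_le_pow₀ (one_le_rpow one_le_two (by linarith))
  have hconv : ConvexOn ℝ (Ici 0) (fun s ↦ s ^ p - c * powerGradNormSq p a b s) :=
    (convexOn_rpow hp).sub (powerGradNormSq.concaveOn_const_mul c _ (convex_Ici 0))
  have hleft : ((a - b) ^ 2) ^ p ≤ c * powerGradNormSq p a b ((a - b) ^ 2) := by
    rw [powerGradNormSq.apply_sub_sq, ← sq_abs (a - b), ← rpow_pow_comm (abs_nonneg _),
      ← sq_abs (a ^ p - b ^ p)]
    calc (|a - b| ^ p) ^ 2 ≤ |a ^ p - b ^ p| ^ 2 := by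
          gcongr; exact abs_sub_rpow_le_abs_rpow_sub_rpow ha hb hp
      _ ≤ c * |a ^ p - b ^ p| ^ 2 := le_mul_of_one_le_left (sq_nonneg _) hc
  have hright : ((a + b) ^ 2) ^ p ≤ c * powerGradNormSq p a b ((a + b) ^ 2) := by
    rw [powerGradNormSq.apply_add_sq hp0 ha hb, ← rpow_pow_comm (by positivity), ← mul_pow]
    gcongr
    exact rpow_add_le_mul_rpow_add_rpow ha hb hp
  exact sub_nonpos.1 <| (hconv.le_max_of_mem_Icc (mem_Ici.2 (sq_nonneg _))
    (mem_Ici.2 (sq_nonneg _)) hs).trans (max_le (sub_nonpos.2 hleft) (sub_nonpos.2 hright))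

/-- **gradient-difference bound of Proposition 1.**
In a real inner product space, for `p ≥ 1` and the map `∇φ_p(x) = ‖x‖^(p−1) x`,
one has `‖‖x‖^(p−1) x − ‖y‖^(p−1) y‖ ≥ (1/2^(p−1)) ‖x − y‖^p`. -/
theorem power_gradient_difference_bound
    {E : Type*} [NormedAddCommGroup E] [InnerProductSpace ℝ E]
    (p : ℝ) (hp : 1 ≤ p) (x y : E) :
    (1 / (2 : ℝ) ^ (p - 1)) * ‖x - y‖ ^ p
      ≤ ‖(‖x‖ ^ (p - 1)) • x - (‖y‖ ^ (p - 1)) • y‖ := by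
  have hs : ‖x - y‖ ^ 2 ∈ Icc ((‖x‖ - ‖y‖) ^ 2) ((‖x‖ + ‖y‖) ^ 2) :=
    ⟨sq_le_sq.2 ((abs_norm_sub_norm_le x y).trans (le_abs_self _)),
      pow_le_pow_left₀ (norm_nonneg _) (norm_sub_le x y) 2⟩
  have hsq := rpow_le_two_rpow_sq_mul_powerGradNormSq hp (norm_nonneg x) (norm_nonneg y) hs
  rw [← norm_rpow_smul_sub_rpow_smul_sq (by positivity), ← rpow_pow_comm (norm_nonneg _),
    ← mul_pow] at hsq
  rw [one_div_mul_eq_div, div_le_iff₀' (by positivity)]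
  exact (pow_le_pow_iff_left₀ (by positivity) (by positivity) two_ne_zero).1 hsq
end

section
/- Let E be a real inner product space, let p ≥ 1, and let φ_p(x) = (1/(p+1))‖x‖^{p+1}, whose gradient is ∇φ_p(y) = ‖y‖^{p−1} y. Then for all x, y ∈ E the Bregman divergence satisfies D_{φ_p}(x,y) = φ_p(x) − φ_p(y) − ⟨∇φ_p(y), x−y⟩ ≥ (1/2^{p−1}) · (1/(p+1)) · ‖x−y‖^{p+1}. Equivalently, φ_p is (σ, r)-uniformly convex with σ = (p+1)/2^{p−1} and r = p+1. -/
/-!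
Write `a = ‖u‖`, `b = ‖v‖` and `⟪u, v⟫ = (s - t) a b` with `s, t ≥ 0`, `s + t = 1`. Then
`‖u - v‖² = s (a - b)² + t (a + b)²`, while `⟪‖u‖^(p-1) u - ‖v‖^(p-1) v, u - v⟫` is affine in
`⟪u, v⟫`; convexity of `x ↦ x^((p+1)/2)` therefore reduces the monotonicity estimate
`‖u - v‖^(p+1) ≤ 2^(p-1) ⟪∇φ_p u - ∇φ_p v, u - v⟫` to the aligned case, where superadditivity
of `x ↦ x^p` gives it with constant `1`, and the antipodal case, which is the power-mean
inequality `(a + b)^p ≤ 2^(p-1) (a^p + b^p)`. Integrating this estimate along the segment from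
`y` to `x` turns it into the lower bound on the Bregman divergence, with the extra factor
`1 / (p + 1)`.
-/

open RealInnerProductSpace

lemma abs_sub_rpow_succ_le_rpow_sub_rpow_mul_sub {p a b : ℝ} (hp : 1 ≤ p) (ha : 0 ≤ a)
    (hb : 0 ≤ b) : |a - b| ^ (p + 1) ≤ (a ^ p - b ^ p) * (a - b) := by
  wlog hba : b ≤ a generalizing a b
  · rw [abs_sub_comm, show (a ^ p - b ^ p) * (a - b) = (b ^ p - a ^ p) * (b - a) by ring]
    exact this hb ha (le_of_not_ge hba)
  have hab : 0 ≤ a - b := sub_nonneg.2 hba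
  have hsuper : b ^ p + (a - b) ^ p ≤ a ^ p := by
    simpa using Real.add_rpow_le_rpow_add hb hab hp
  rw [abs_of_nonneg hab, Real.rpow_add_one' hab (by linarith)]
  exact mul_le_mul_of_nonneg_right (by linarith) hab

lemma add_rpow_succ_le_two_rpow_mul {p a b : ℝ} (hp : 1 ≤ p) (ha : 0 ≤ a) (hb : 0 ≤ b) :
    (a + b) ^ (p + 1) ≤ 2 ^ (p - 1) * ((a ^ p + b ^ p) * (a + b)) := by
  have hmean : (a + b) ^ p ≤ 2 ^ (p - 1) * (a ^ p + b ^ p) := by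
    lift a to NNReal using ha
    lift b to NNReal using hb
    exact_mod_cast NNReal.rpow_add_le_mul_rpow_add_rpow a b hp
  rw [Real.rpow_add_one' (by positivity) (by linarith), ← mul_assoc]
  exact mul_le_mul_of_nonneg_right hmean (by positivity)

lemma rpow_le_two_rpow_mul_of_abs_le {p a b w : ℝ} (hp : 1 ≤ p) (ha : 0 ≤ a) (hb : 0 ≤ b)
    (hw : |w| ≤ a * b) :
    (a ^ 2 - 2 * w + b ^ 2) ^ ((p + 1) / 2)
      ≤ 2 ^ (p - 1) * (a ^ (p - 1) * (a ^ 2 - w) + b ^ (p - 1) * (b ^ 2 - w)) := by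
  have hw_mem : w ∈ segment ℝ (a * b) (-(a * b)) := by
    rw [segment_symm, segment_eq_Icc (by nlinarith [mul_nonneg ha hb])]
    exact abs_le.1 hw
  obtain ⟨s, t, hs, ht, hst, rfl⟩ := hw_mem
  have hsq : ∀ c : ℝ, (c ^ 2) ^ ((p + 1) / 2) = |c| ^ (p + 1) := fun c ↦ by
    rw [Real.rpow_div_two_eq_sqrt _ (sq_nonneg c), Real.sqrt_sq_eq_abs]
  have hconv := (convexOn_rpow (p := (p + 1) / 2) (by linarith)).2
    (sq_nonneg (a - b)) (sq_nonneg (a + b)) hs ht hst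
  simp only [smul_eq_mul, hsq, abs_of_nonneg (add_nonneg ha hb)] at hconv
  have haligned := abs_sub_rpow_succ_le_rpow_sub_rpow_mul_sub hp ha hb
  have hantipodal := add_rpow_succ_le_two_rpow_mul hp ha hb
  have hone : (1 : ℝ) ≤ 2 ^ (p - 1) := Real.one_le_rpow (by norm_num) (by linarith)
  have hpow : ∀ c : ℝ, 0 ≤ c → c ^ p = c ^ (p - 1) * c := fun c hc ↦ by
    simpa using Real.rpow_add_one' hc (by linarith : p - 1 + 1 ≠ 0)
  calc (a ^ 2 - 2 * (s * (a * b) + t * -(a * b)) + b ^ 2) ^ ((p + 1) / 2)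
      = (s * (a - b) ^ 2 + t * (a + b) ^ 2) ^ ((p + 1) / 2) := by
        congr 1; linear_combination (a ^ 2 + b ^ 2) * hst.symm
    _ ≤ s * |a - b| ^ (p + 1) + t * (a + b) ^ (p + 1) := hconv
    _ ≤ s * ((a ^ p - b ^ p) * (a - b)) + t * (2 ^ (p - 1) * ((a ^ p + b ^ p) * (a + b))) := by
        gcongr
    _ ≤ 2 ^ (p - 1) * (s * ((a ^ p - b ^ p) * (a - b)) + t * ((a ^ p + b ^ p) * (a + b))) := by
        nlinarith [mul_nonneg hs ((Real.rpow_nonneg (abs_nonneg _) _).trans haligned)]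
    _ = _ := by
        rw [hpow a ha, hpow b hb]
        linear_combination (a ^ (p - 1) * a ^ 2 + b ^ (p - 1) * b ^ 2) * 2 ^ (p - 1) * hst

section InnerProductSpace

variable {E : Type*} [NormedAddCommGroup E] [InnerProductSpace ℝ E]

theorem norm_sub_rpow_succ_le_two_rpow_mul_inner {p : ℝ} (hp : 1 ≤ p) (u v : E) :
    ‖u - v‖ ^ (p + 1) ≤ 2 ^ (p - 1) * ⟪‖u‖ ^ (p - 1) • u - ‖v‖ ^ (p - 1) • v, u - v⟫ := by
  have hnorm : ‖u - v‖ ^ (p + 1) = (‖u - v‖ ^ 2) ^ ((p + 1) / 2) := by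
    rw [Real.rpow_div_two_eq_sqrt _ (sq_nonneg _), Real.sqrt_sq (norm_nonneg _)]
  have hinner : ⟪‖u‖ ^ (p - 1) • u - ‖v‖ ^ (p - 1) • v, u - v⟫
      = ‖u‖ ^ (p - 1) * (‖u‖ ^ 2 - ⟪u, v⟫) + ‖v‖ ^ (p - 1) * (‖v‖ ^ 2 - ⟪u, v⟫) := by
    simp only [inner_sub_left, inner_sub_right, real_inner_smul_left, real_inner_self_eq_norm_sq,
      real_inner_comm u v]
    ring
  rw [hnorm, norm_sub_sq_real, hinner]
  exact rpow_le_two_rpow_mul_of_abs_le hp (norm_nonneg u) (norm_nonneg v)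
    (abs_real_inner_le_norm u v)

theorem hasFDerivAt_norm_rpow_succ_div {p : ℝ} (hp : 0 < p) (x : E) :
    HasFDerivAt (fun x : E ↦ 1 / (p + 1) * ‖x‖ ^ (p + 1)) (innerSL ℝ (‖x‖ ^ (p - 1) • x)) x := by
  refine ((hasFDerivAt_norm_rpow x (by linarith : 1 < p + 1)).const_mul
    (1 / (p + 1))).congr_fderiv ?_
  rw [map_smul, smul_smul, show p + 1 - 2 = p - 1 by ring]
  congr 1
  field_simp

theorem div_mul_norm_sub_rpow_le_of_le_inner_sub {φ : E → ℝ} {G : E → E}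
    (hφ : ∀ u, HasFDerivAt φ (innerSL ℝ (G u)) u) {c r : ℝ} (hr : 0 < r)
    (hG : ∀ u v, c * ‖u - v‖ ^ r ≤ ⟪G u - G v, u - v⟫) (x y : E) :
    c / r * ‖x - y‖ ^ r ≤ φ x - φ y - ⟪G y, x - y⟫ := by
  set w := x - y
  let F : ℝ → ℝ := fun t ↦ φ (y + t • w) - t * ⟪G y, w⟫ - c / r * ‖w‖ ^ r * t ^ r
  let F' : ℝ → ℝ := fun t ↦ ⟪G (y + t • w), w⟫ - ⟪G y, w⟫ - c * ‖w‖ ^ r * t ^ (r - 1)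
  have hline : ∀ t : ℝ, HasDerivAt (fun t : ℝ ↦ y + t • w) w t := fun t ↦ by
    simpa using ((hasDerivAt_id t).smul_const w).const_add y
  have hF : ∀ t ∈ Set.Ioo (0 : ℝ) 1, HasDerivAt F (F' t) t := fun t ht ↦ by
    have hφ_line := (hφ (y + t • w)).comp_hasDerivAt t (hline t)
    have hlinear := (hasDerivAt_id t).mul_const ⟪G y, w⟫
    have hpow := (Real.hasDerivAt_rpow_const (p := r) (Or.inl ht.1.ne')).const_mul
      (c / r * ‖w‖ ^ r)
    refine ((hφ_line.sub hlinear).sub hpow).congr_deriv ?_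
    rw [innerSL_apply_apply]
    field_simp
    rfl
  have hF'_nonneg : ∀ t ∈ Set.Ioo (0 : ℝ) 1, 0 ≤ F' t := fun t ⟨ht₀, _⟩ ↦ by
    have htr : t ^ r = t * t ^ (r - 1) := by
      rw [Real.rpow_sub_one ht₀.ne', mul_div_cancel₀ _ ht₀.ne']
    have h := hG (y + t • w) y
    rw [add_sub_cancel_left, inner_smul_right, inner_sub_left, norm_smul,
      Real.norm_of_nonneg ht₀.le, Real.mul_rpow ht₀.le (norm_nonneg _), htr] at h
    refine sub_nonneg.2 (le_of_mul_le_mul_left ?_ ht₀)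
    linarith
  have hφ_cont : Continuous φ := continuous_iff_continuousAt.2 fun u ↦ (hφ u).continuousAt
  have hF_mono : MonotoneOn F (Set.Icc 0 1) := by
    refine monotoneOn_of_hasDerivWithinAt_nonneg (f' := F') (convex_Icc 0 1) ?_ ?_ ?_
    · have := Real.continuous_rpow_const hr.le
      fun_prop
    · rw [interior_Icc]
      exact fun t ht ↦ (hF t ht).hasDerivWithinAt
    · rwa [interior_Icc]
  have h01 := hF_mono (Set.left_mem_Icc.2 zero_le_one) (Set.right_mem_Icc.2 zero_le_one)
    zero_le_one
  simp only [F, w, zero_smul, add_zero, zero_mul, sub_zero, Real.zero_rpow hr.ne', mul_zero,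
    one_smul, add_sub_cancel, one_mul, Real.one_rpow, mul_one] at h01
  linarith

end InnerProductSpace

/-- **Corollary of Proposition 1.**  For `p ≥ 1` and
`φ_p(x) = (1/(p+1))‖x‖^(p+1)` with gradient `∇φ_p(y) = ‖y‖^(p−1) y`
in a real inner product space, the Bregman divergence satisfies
`D_{φ_p}(x,y) = φ_p(x) − φ_p(y) − ⟪∇φ_p(y), x−y⟫
  ≥ (1/2^(p−1))·(1/(p+1))·‖x−y‖^(p+1)`;
equivalently, `φ_p` is `(σ,r)`-uniformly convex with `σ = (p+1)/2^(p−1)`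
and `r = p+1`. -/
theorem power_function_uniformly_convex
    {E : Type*} [NormedAddCommGroup E] [InnerProductSpace ℝ E]
    (p : ℝ) (hp : 1 ≤ p) (x y : E) :
    (1 / (2 : ℝ) ^ (p - 1)) * (1 / (p + 1)) * ‖x - y‖ ^ (p + 1)
      ≤ (1 / (p + 1)) * ‖x‖ ^ (p + 1) - (1 / (p + 1)) * ‖y‖ ^ (p + 1)
        - ⟪(‖y‖ ^ (p - 1)) • y, x - y⟫ := by
  have hmono : ∀ u v : E, 1 / (2 : ℝ) ^ (p - 1) * ‖u - v‖ ^ (p + 1)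
      ≤ ⟪‖u‖ ^ (p - 1) • u - ‖v‖ ^ (p - 1) • v, u - v⟫ := fun u v ↦ by
    rw [one_div, inv_mul_le_iff₀ (by positivity)]
    exact norm_sub_rpow_succ_le_two_rpow_mul_inner hp u v
  have h := div_mul_norm_sub_rpow_le_of_le_inner_sub
    (fun u ↦ hasFDerivAt_norm_rpow_succ_div (by linarith) u) (by linarith) hmono x y
  rwa [div_eq_mul_one_div] at h
end

section
/- Let E be a real inner product space, σ > 0, r ≥ 2, and let φ : E → ℝ be differentiable and (σ,r)-uniformly convex. Let η > 0, g ∈ E, and suppose w, u ∈ E satisfy ∇φ(u) = ∇φ(w) − η g. Then for every x ∈ E: D_φ(x, u) ≤ D_φ(x, w) − η⟨g, w − x⟩ + ((r−1)/r) · σ^{−1/(r−1)} · (η‖g‖)^{r/(r−1)}. -/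
open RealInnerProductSpace

/-! Subtracting the Bregman divergences at `u` and `w` leaves `D_φ(u,w)` and a linear term
`⟪φ' w - φ' u, x - u⟫ = η⟪g, x - u⟫`. Uniform convexity bounds `D_φ(u,w)` below by
`(σ/r)‖u - w‖^r`, and Young's inequality with exponents `r` and `r/(r-1)` absorbs the part
`η⟪g, w - u⟫ ≤ η‖g‖‖u - w‖` of the linear term into it. -/

/-- Young's inequality `a t ≤ σ tʳ / r + a^q / (q σ^(q-1))`, where `q = r/(r-1)` is the
conjugate exponent of `r`. -/
theorem Real.young_inequality_of_nonneg_weighted {σ r a t : ℝ} (hσ : 0 < σ) (hr : 1 < r)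
    (ha : 0 ≤ a) (ht : 0 ≤ t) :
    a * t ≤ σ / r * t ^ r + (r - 1) / r * σ ^ (-(1 / (r - 1))) * a ^ (r / (r - 1)) := by
  have hr0 : r ≠ 0 := by positivity
  have hpq : r.HolderConjugate (r / (r - 1)) :=
    (Real.holderConjugate_iff_eq_conjExponent hr).2 rfl
  -- Young for `σ^(1/r) t` and `σ^(-1/r) a`; the powers of `σ` cancel in the product.
  have young := Real.young_inequality_of_nonneg (mul_nonneg (Real.rpow_nonneg hσ.le (1 / r)) ht)
    (mul_nonneg ha (Real.rpow_nonneg hσ.le (-(1 / r)))) hpq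
  have hprod : σ ^ (1 / r) * t * (a * σ ^ (-(1 / r))) = a * t := by
    rw [mul_mul_mul_comm, mul_comm t, mul_mul_mul_comm, ← Real.rpow_add hσ, add_neg_cancel,
      Real.rpow_zero, one_mul, mul_comm]
  have hfirst : (σ ^ (1 / r) * t) ^ r = σ * t ^ r := by
    rw [Real.mul_rpow (Real.rpow_nonneg hσ.le _) ht, ← Real.rpow_mul hσ.le,
      one_div_mul_cancel hr0, Real.rpow_one]
  have hsecond :
      (a * σ ^ (-(1 / r))) ^ (r / (r - 1)) = σ ^ (-(1 / (r - 1))) * a ^ (r / (r - 1)) := by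
    rw [Real.mul_rpow ha (Real.rpow_nonneg hσ.le _), ← Real.rpow_mul hσ.le, mul_comm]
    congr 2
    field_simp
  rw [hprod, hfirst, hsecond] at young
  calc a * t ≤ σ * t ^ r / r + σ ^ (-(1 / (r - 1))) * a ^ (r / (r - 1)) / (r / (r - 1)) := young
    _ = _ := by field_simp

section Bregman

variable {E : Type*} [NormedAddCommGroup E] [InnerProductSpace ℝ E]

def bregmanDiv (φ : E → ℝ) (φ' : E → E) (x y : E) : ℝ :=
  φ x - φ y - ⟪φ' y, x - y⟫

theorem bregmanDiv_three_point (φ : E → ℝ) (φ' : E → E) (x u w : E) :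
    bregmanDiv φ φ' x u =
      bregmanDiv φ φ' x w - bregmanDiv φ φ' u w + ⟪φ' w - φ' u, x - u⟫ := by
  have hsplit : x - w = (x - u) + (u - w) := by abel
  simp only [bregmanDiv, hsplit, inner_add_right, inner_sub_left]
  ring

theorem le_bregmanDiv_of_uniformlyConvex {φ : E → ℝ} {φ' : E → E} {σ r : ℝ}
    (hUC : ∀ x y : E, φ y + ⟪φ' y, x - y⟫ + (σ / r) * ‖x - y‖ ^ r ≤ φ x) (x y : E) :
    (σ / r) * ‖x - y‖ ^ r ≤ bregmanDiv φ φ' x y := by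
  have := hUC x y
  unfold bregmanDiv
  linarith

end Bregman

theorem mirror_descent_one_step_general
    {E : Type*} [NormedAddCommGroup E] [InnerProductSpace ℝ E]
    (σ r : ℝ) (hσ : 0 < σ) (hr : 2 ≤ r)
    (φ : E → ℝ) (φ' : E → E)
    (hUC : ∀ x y : E, φ y + ⟪φ' y, x - y⟫ + (σ / r) * ‖x - y‖ ^ r ≤ φ x)
    (η : ℝ) (hη : 0 < η) (g w u : E)
    (hstep : φ' u = φ' w - η • g) (x : E) :
    φ x - φ u - ⟪φ' u, x - u⟫
      ≤ (φ x - φ w - ⟪φ' w, x - w⟫) - η * ⟪g, w - x⟫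
        + ((r - 1) / r) * σ ^ (-(1 / (r - 1))) * (η * ‖g‖) ^ (r / (r - 1)) := by
  change bregmanDiv φ φ' x u ≤ bregmanDiv φ φ' x w - η * ⟪g, w - x⟫ + _
  have hlinear : ⟪φ' w - φ' u, x - u⟫ = η * ⟪g, w - u⟫ - η * ⟪g, w - x⟫ := by
    rw [hstep, sub_sub_cancel, real_inner_smul_left, ← mul_sub, ← inner_sub_right,
      sub_sub_sub_cancel_left]
  have hcs : η * ⟪g, w - u⟫ ≤ η * ‖g‖ * ‖u - w‖ := by
    rw [mul_assoc, norm_sub_rev]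
    exact mul_le_mul_of_nonneg_left (real_inner_le_norm g (w - u)) hη.le
  have hyoung := Real.young_inequality_of_nonneg_weighted hσ (r := r) (by linarith)
    (mul_nonneg hη.le (norm_nonneg g)) (norm_nonneg (u - w))
  have hconvex := le_bregmanDiv_of_uniformlyConvex hUC u w
  rw [bregmanDiv_three_point φ φ' x u w, hlinear]
  linarith

/-- **one-step mirror descent inequality.**
Let `φ : E → ℝ` be differentiable with gradient `φ'` and `(σ,r)`-uniformly
convex on a real inner product space `E`, and let the mirror step satisfy
`φ'(u) = φ'(w) − η • g` with `η > 0`.  Then, writing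
`D_φ(a,b) = φ(a) − φ(b) − ⟪φ'(b), a − b⟫` for the Bregman divergence, for
every `x ∈ E`:
`D_φ(x,u) ≤ D_φ(x,w) − η⟪g, w − x⟫ + ((r−1)/r)·σ^(−1/(r−1))·(η‖g‖)^(r/(r−1))`. -/
theorem mirror_descent_one_step
    {E : Type*} [NormedAddCommGroup E] [InnerProductSpace ℝ E]
    (σ r : ℝ) (hσ : 0 < σ) (hr : 2 ≤ r)
    (φ : E → ℝ) (φ' : E → E)
    (hdiff : ∀ x, HasFDerivAt φ (innerSL ℝ (φ' x)) x)
    (hUC : ∀ x y : E, φ y + ⟪φ' y, x - y⟫ + (σ / r) * ‖x - y‖ ^ r ≤ φ x)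
    (η : ℝ) (hη : 0 < η) (g w u : E)
    (hstep : φ' u = φ' w - η • g) (x : E) :
    φ x - φ u - ⟪φ' u, x - u⟫
      ≤ (φ x - φ w - ⟪φ' w, x - w⟫) - η * ⟪g, w - x⟫
        + ((r - 1) / r) * σ ^ (-(1 / (r - 1))) * (η * ‖g‖) ^ (r / (r - 1)) :=
  mirror_descent_one_step_general σ r hσ hr φ φ' hUC η hη g w u hstep x
end

section
/- Let E = ℝ^d, let σ > 0 and r ≥ 2, and let φ : E → ℝ be differentiable and (σ,r)-uniformly convex. Let f_1, …, f_m : E → ℝ be convex, differentiable, and G_l-Lipschitz. Suppose w_1, …, w_m, w̄ ∈ E satisfy ‖∇φ(w_i) − ∇φ(w̄)‖ ≤ Δ for all i, where Δ ≥ 0. Then for every i, ‖w_i − w̄‖ ≤ (rΔ/(2σ))^{1/(r−1)}, and consequently for every x ∈ E, ∑_{i=1}^m f_i(w̄) − ∑_{i=1}^m f_i(w_i) ≤ m G_l (rΔ/(2σ))^{1/(r−1)}. -/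
open RealInnerProductSpace

/-!
Adding the uniform convexity inequality at `(x, y)` and at `(y, x)` makes the gradient
`(2σ/r, r)`-strongly monotone: `2 (σ/r) ‖x - y‖ ^ r ≤ ⟪∇φ x - ∇φ y, x - y⟫`. Bounding the right
side by Cauchy–Schwarz and the mirror-space gap `Δ`, then cancelling one factor `‖x - y‖`,
gives `‖x - y‖ ^ (r - 1) ≤ r Δ / (2σ)`. The function-value gap is then controlled term by term
through the Lipschitz bound.
-/

section UniformConvexity

variable {E : Type*} [NormedAddCommGroup E] [InnerProductSpace ℝ E]

/-- `(σ, r)`-uniform convexity of `φ`, with `g` in the role of `∇φ`. -/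
def UniformlyConvexWith (φ : E → ℝ) (g : E → E) (σ r : ℝ) : Prop :=
  ∀ x y, φ y + ⟪g y, x - y⟫ + (σ / r) * ‖x - y‖ ^ r ≤ φ x

theorem Real.le_rpow_one_div_of_mul_rpow_le_mul {c Δ t r : ℝ} (hc : 0 < c) (hr : 1 < r)
    (hΔ : 0 ≤ Δ) (ht : 0 ≤ t) (h : c * t ^ r ≤ Δ * t) : t ≤ (Δ / c) ^ (1 / (r - 1)) := by
  rw [one_div, Real.le_rpow_inv_iff_of_pos ht (by positivity) (by linarith), le_div_iff₀' hc]
  rcases ht.eq_or_lt with rfl | ht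
  · rw [Real.zero_rpow (by linarith)]
    simpa using hΔ
  · rwa [Real.rpow_sub_one ht.ne', ← mul_div_assoc, div_le_iff₀ ht]

namespace UniformlyConvexWith

variable {φ : E → ℝ} {g : E → E} {σ r : ℝ}

theorem two_mul_rpow_le_inner_sub (h : UniformlyConvexWith φ g σ r) (x y : E) :
    2 * (σ / r) * ‖x - y‖ ^ r ≤ ⟪g x - g y, x - y⟫ := by
  have hxy := h x y
  have hyx := h y x
  rw [← neg_sub x y, norm_neg, inner_neg_right] at hyx
  rw [inner_sub_left]
  linarith

theorem norm_sub_le (h : UniformlyConvexWith φ g σ r) (hσ : 0 < σ) (hr : 1 < r) {x y : E}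
    {Δ : ℝ} (hg : ‖g x - g y‖ ≤ Δ) : ‖x - y‖ ≤ (r * Δ / (2 * σ)) ^ (1 / (r - 1)) := by
  have hmono : 2 * (σ / r) * ‖x - y‖ ^ r ≤ Δ * ‖x - y‖ :=
    calc 2 * (σ / r) * ‖x - y‖ ^ r ≤ ⟪g x - g y, x - y⟫ := h.two_mul_rpow_le_inner_sub x y
      _ ≤ ‖g x - g y‖ * ‖x - y‖ := real_inner_le_norm _ _
      _ ≤ Δ * ‖x - y‖ := by gcongr
  have hr0 : 0 < r := by linarith
  have hconst : r * Δ / (2 * σ) = Δ / (2 * (σ / r)) := by field_simp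
  rw [hconst]
  exact Real.le_rpow_one_div_of_mul_rpow_le_mul (by positivity) hr
    ((norm_nonneg _).trans hg) (norm_nonneg _) hmono

end UniformlyConvexWith

end UniformConvexity

theorem sum_sub_sum_le_of_abs_sub_le {ι E : Type*} [Fintype ι] [SeminormedAddCommGroup E]
    {f : ι → E → ℝ} {G ρ : ℝ} (hG : 0 ≤ G) (hLip : ∀ i x y, |f i x - f i y| ≤ G * ‖x - y‖)
    {w : ι → E} {wbar : E} (hw : ∀ i, ‖w i - wbar‖ ≤ ρ) :
    ∑ i, f i wbar - ∑ i, f i (w i) ≤ Fintype.card ι * G * ρ := by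
  have hterm : ∀ i, f i wbar - f i (w i) ≤ G * ρ := fun i =>
    calc f i wbar - f i (w i) ≤ |f i wbar - f i (w i)| := le_abs_self _
      _ ≤ G * ‖w i - wbar‖ := by rw [norm_sub_rev]; exact hLip i _ _
      _ ≤ G * ρ := by gcongr; exact hw i
  rw [← Finset.sum_sub_distrib, mul_assoc]
  simpa using Finset.sum_le_sum fun i (_ : i ∈ Finset.univ) => hterm i

theorem consensus_to_function_gap_general
    {d m : ℕ}
    (σ r : ℝ) (hσ : 0 < σ) (hr : 2 ≤ r)
    (φ : EuclideanSpace ℝ (Fin d) → ℝ)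
    (hUC : ∀ x y : EuclideanSpace ℝ (Fin d),
      φ y + ⟪gradient φ y, x - y⟫ + (σ / r) * ‖x - y‖ ^ r ≤ φ x)
    (f : Fin m → EuclideanSpace ℝ (Fin d) → ℝ)
    (G_l : ℝ) (hG : 0 ≤ G_l)
    (hLip : ∀ i, ∀ x y : EuclideanSpace ℝ (Fin d), |f i x - f i y| ≤ G_l * ‖x - y‖)
    (w : Fin m → EuclideanSpace ℝ (Fin d)) (wbar : EuclideanSpace ℝ (Fin d))
    (Δ : ℝ)
    (hcons : ∀ i, ‖gradient φ (w i) - gradient φ wbar‖ ≤ Δ) :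
    (∀ i, ‖w i - wbar‖ ≤ (r * Δ / (2 * σ)) ^ (1 / (r - 1))) ∧
    ∑ i, f i wbar - ∑ i, f i (w i)
      ≤ (m : ℝ) * G_l * (r * Δ / (2 * σ)) ^ (1 / (r - 1)) := by
  have hdist (i : Fin m) : ‖w i - wbar‖ ≤ (r * Δ / (2 * σ)) ^ (1 / (r - 1)) :=
    UniformlyConvexWith.norm_sub_le hUC hσ (by linarith) (hcons i)
  refine ⟨hdist, ?_⟩
  simpa using sum_sub_sum_le_of_abs_sub_le hG hLip hdist

/-- **from mirror-space consensus to function-value gap.**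
Let `φ : ℝ^d → ℝ` be differentiable and `(σ,r)`-uniformly convex, and let the
local losses `f i` be convex, differentiable, and `G_l`-Lipschitz.  If
`‖∇φ(w i) − ∇φ(w̄)‖ ≤ Δ` for all `i`, then `‖w i − w̄‖ ≤ (rΔ/(2σ))^(1/(r−1))`
for every `i`, and consequently
`∑ i, f i w̄ − ∑ i, f i (w i) ≤ m G_l (rΔ/(2σ))^(1/(r−1))`. -/
theorem consensus_to_function_gap
    {d m : ℕ} (hm : 1 ≤ m)
    (σ r : ℝ) (hσ : 0 < σ) (hr : 2 ≤ r)
    (φ : EuclideanSpace ℝ (Fin d) → ℝ)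
    (hφdiff : Differentiable ℝ φ)
    (hUC : ∀ x y : EuclideanSpace ℝ (Fin d),
      φ y + ⟪gradient φ y, x - y⟫ + (σ / r) * ‖x - y‖ ^ r ≤ φ x)
    (f : Fin m → EuclideanSpace ℝ (Fin d) → ℝ)
    (hconv : ∀ i, ConvexOn ℝ Set.univ (f i))
    (hfdiff : ∀ i, Differentiable ℝ (f i))
    (G_l : ℝ) (hG : 0 ≤ G_l)
    (hLip : ∀ i, ∀ x y : EuclideanSpace ℝ (Fin d), |f i x - f i y| ≤ G_l * ‖x - y‖)
    (w : Fin m → EuclideanSpace ℝ (Fin d)) (wbar : EuclideanSpace ℝ (Fin d))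
    (Δ : ℝ) (hΔ : 0 ≤ Δ)
    (hcons : ∀ i, ‖gradient φ (w i) - gradient φ wbar‖ ≤ Δ) :
    (∀ i, ‖w i - wbar‖ ≤ (r * Δ / (2 * σ)) ^ (1 / (r - 1))) ∧
    ∑ i, f i wbar - ∑ i, f i (w i)
      ≤ (m : ℝ) * G_l * (r * Δ / (2 * σ)) ^ (1 / (r - 1)) :=
  consensus_to_function_gap_general σ r hσ hr φ hUC f G_l hG hLip w wbar Δ hcons
end
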